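/- Under the stated context, (α + β)² is a nonzero rational integer. -/

import Mathlib

open Polynomial IntermediateField

noncomputable def sqrtneg (c : ℕ) : ℂ := Complex.I * Real.sqrt c

lemma sqrtneg_sq (c : ℕ) : sqrtneg c ^ 2 = -(c : ℂ) := by
  have h : ((Real.sqrt c : ℝ) : ℂ) ^ 2 = (c : ℂ) := by
    rw [← Complex.ofReal_pow, Real.sq_sqrt (by positivity)]
    norm_num
  simp [sqrtneg, mul_pow, Complex.I_sq, h]

lemma sqrtneg_isIntegral (c : ℕ) : IsIntegral ℚ (sqrtneg c) := by
  refine ⟨X ^ 2 + C (c : ℚ), monic_X_pow_add_C _ two_ne_zero, ?_⟩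
  simp [eval₂_add, eval₂_pow, sqrtneg_sq c]

/-- The field `K = ℚ(√-c)`, realised as the subfield of `ℂ` generated by `i·√c`. -/
noncomputable def Kf (c : ℕ) : IntermediateField ℚ ℂ := ℚ⟮sqrtneg c⟯

/-- The class number of `ℚ(√-c)`. -/
noncomputable def classNumberK (c : ℕ) : ℕ :=
  haveI : FiniteDimensional ℚ (Kf c) :=
    IntermediateField.adjoin.finiteDimensional (sqrtneg_isIntegral c)
  haveI : NumberField (Kf c) := ⟨⟩
  NumberField.classNumber (Kf c)

/-!
Let `t = δ + δ̄` and `N = δ δ̄`. As `δ ∈ ℚ(√-c)` is integral, `t` is a rational integer, and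
taking norms in `C₁^((p-1)/2) (C₁ x + d √-c) = δᵖ` gives `N = C₁ y`, while taking traces gives
`δᵖ + δ̄ᵖ = 2 C₁^((p+1)/2) x`. The power sum `δᵖ + δ̄ᵖ` is the Dickson polynomial `D_p(t, N)`,
which is congruent to `tᵖ` modulo `N`; hence `C₁ ∣ tᵖ`, so `C₁ ∣ t` because `C₁` is squarefree,
and `(α + β)² = t² / C₁ = C₁ (t / C₁)²`. Finally `t ≠ 0`, since for odd `p` it would force
`δᵖ + δ̄ᵖ = 0`, i.e. `x = 0`.
-/

open ComplexConjugate

namespace Polynomial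

variable {R : Type*} [CommRing R]

theorem dickson_one_eval_add (x y : R) (n : ℕ) :
    (dickson 1 (x * y) n).eval (x + y) = x ^ n + y ^ n := by
  induction n using Nat.twoStepInduction with
  | zero => norm_num [dickson_zero]
  | one => simp [dickson_one]
  | more n ih₀ ih₁ =>
    simp only [dickson_add_two, eval_sub, eval_mul, eval_X, eval_C, ih₀, ih₁]
    ring

theorem C_dvd_dickson_one_sub_X_pow (a : R) {n : ℕ} (hn : n ≠ 0) :
    C a ∣ dickson 1 a n - X ^ n := by
  obtain ⟨n, rfl⟩ := Nat.exists_eq_succ_of_ne_zero hn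
  induction n with
  | zero => simp [dickson_one]
  | succ n ih =>
    have h : dickson 1 a (n + 2) - X ^ (n + 2) =
        X * (dickson 1 a (n + 1) - X ^ (n + 1)) - C a * dickson 1 a n := by
      rw [dickson_add_two]; ring
    rw [h]
    exact dvd_sub (dvd_mul_of_dvd_right (ih n.succ_ne_zero) _) (dvd_mul_right _ _)

theorem dickson_one_eval_intCast {u v : R} {t N : ℤ} (ht : u + v = t) (hN : u * v = N) (n : ℕ) :
    (((dickson 1 N n).eval t : ℤ) : R) = u ^ n + v ^ n := by
  rw [← eq_intCast (Int.castRingHom R), ← eval₂_hom, ← eval_map, map_dickson, eq_intCast,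
    eq_intCast, ← ht, ← hN, dickson_one_eval_add]

end Polynomial

theorem Int.dvd_of_dvd_dickson_one_eval {M N t : ℤ} (hM : Squarefree M) (hMN : M ∣ N) {n : ℕ}
    (hn : n ≠ 0) (h : M ∣ (dickson 1 N n).eval t) : M ∣ t := by
  have hsub : N ∣ (dickson 1 N n).eval t - t ^ n := by
    simpa using eval_dvd (x := t) (C_dvd_dickson_one_sub_X_pow N hn)
  rw [← hM.dvd_pow_iff_dvd hn]
  simpa using dvd_sub h (hMN.trans hsub)

lemma conj_sqrtneg (c : ℕ) : conj (sqrtneg c) = -sqrtneg c := by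
  simp [sqrtneg, Complex.conj_I]

lemma exists_rat_eq_add_mul_sqrtneg_of_mem_Kf {c : ℕ} {z : ℂ} (hz : z ∈ Kf c) :
    ∃ a b : ℚ, z = a + b * sqrtneg c := by
  have hadj : (Kf c).toSubalgebra = Algebra.adjoin ℚ {sqrtneg c} := by
    simpa [Kf] using adjoin_simple_toSubalgebra_of_isAlgebraic (sqrtneg_isIntegral c).isAlgebraic
  replace hz : z ∈ Algebra.adjoin ℚ {sqrtneg c} := hadj ▸ hz
  induction hz using Algebra.adjoin_induction with
  | mem _ hw =>
    rcases hw with rfl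
    exact ⟨0, 1, by simp⟩
  | algebraMap r => exact ⟨r, 0, by simp⟩
  | add u v _ _ ihu ihv =>
    obtain ⟨a, b, rfl⟩ := ihu
    obtain ⟨a', b', rfl⟩ := ihv
    exact ⟨a + a', b + b', by push_cast; ring⟩
  | mul u v _ _ ihu ihv =>
    obtain ⟨a, b, rfl⟩ := ihu
    obtain ⟨a', b', rfl⟩ := ihv
    refine ⟨a * a' - c * b * b', a * b' + a' * b, ?_⟩
    push_cast
    linear_combination (b * b' : ℂ) * sqrtneg_sq c

lemma exists_int_eq_add_conj_of_mem_Kf {c : ℕ} {z : ℂ} (hK : z ∈ Kf c) (hz : IsIntegral ℤ z) :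
    ∃ t : ℤ, z + conj z = t := by
  obtain ⟨a, b, rfl⟩ := exists_rat_eq_add_mul_sqrtneg_of_mem_Kf hK
  have htrace : (a + b * sqrtneg c : ℂ) + conj (a + b * sqrtneg c) = ((2 * a : ℚ) : ℂ) := by
    simp only [map_add, map_mul, map_ratCast, conj_sqrtneg]
    push_cast; ring
  have hint : IsIntegral ℤ (2 * a) := by
    refine (isIntegral_algHom_iff (algebraMap ℚ ℂ).toIntAlgHom (algebraMap ℚ ℂ).injective).1 ?_
    have hsum : IsIntegral ℤ (_ + conj _) := hz.add (hz.map (starRingEnd ℂ).toIntAlgHom)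
    rw [htrace] at hsum
    exact hsum
  obtain ⟨t, ht⟩ := IsIntegrallyClosed.isIntegral_iff.1 hint
  exact ⟨t, by rw [htrace, ← ht]; simp⟩

lemma Complex.mul_conj_eq_of_pow_eq {z : ℂ} {r : ℝ} (hr : 0 ≤ r) {n : ℕ} (hn : n ≠ 0)
    (h : (z * conj z) ^ n = (r : ℂ) ^ n) : z * conj z = r := by
  rw [Complex.mul_conj] at h ⊢
  exact_mod_cast (pow_left_inj₀ (Complex.normSq_nonneg z) hr hn).1 (by exact_mod_cast h)

lemma pow_add_conj_pow_eq {C₁ c d x p : ℕ} {δ : ℂ}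
    (hδ : (C₁ : ℂ) ^ ((p - 1) / 2) * (C₁ * x + d * sqrtneg c) = δ ^ p) :
    δ ^ p + conj δ ^ p = ((2 * C₁ ^ ((p - 1) / 2 + 1) * x : ℕ) : ℂ) := by
  rw [← map_pow, ← hδ]
  simp only [map_mul, map_add, map_pow, map_natCast, conj_sqrtneg]
  push_cast; ring

lemma pow_mul_conj_pow_eq {C₁ C₂ c d x y p : ℕ} {δ : ℂ} (hp : Odd p)
    (hfact : C₁ * C₂ = c * d ^ 2) (heq : C₁ * x ^ 2 + C₂ = y ^ p)
    (hδ : (C₁ : ℂ) ^ ((p - 1) / 2) * (C₁ * x + d * sqrtneg c) = δ ^ p) :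
    (δ * conj δ) ^ p = (((C₁ * y : ℕ) : ℝ) : ℂ) ^ p := by
  obtain ⟨k, rfl⟩ := hp
  have hfact' : (C₁ * C₂ : ℂ) = c * d ^ 2 := by exact_mod_cast hfact
  have heq' : (C₁ * x ^ 2 + C₂ : ℂ) = y ^ (2 * k + 1) := by exact_mod_cast heq
  rw [mul_pow, ← map_pow, ← hδ, Nat.add_sub_cancel, Nat.mul_div_cancel_left k two_pos]
  simp only [map_mul, map_add, map_pow, map_natCast, conj_sqrtneg]
  push_cast
  linear_combination (-(C₁ : ℂ) ^ (2 * k) * d ^ 2) * sqrtneg_sq c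
    - (C₁ : ℂ) ^ (2 * k) * hfact' + (C₁ : ℂ) ^ (2 * k + 1) * heq'

lemma div_ofReal_sqrt_add_div_ofReal_sqrt_sq (u v : ℂ) {r : ℝ} (hr : 0 ≤ r) :
    (u / (Real.sqrt r : ℂ) + v / (Real.sqrt r : ℂ)) ^ 2 = (u + v) ^ 2 / r := by
  rw [← add_div, div_pow, ← Complex.ofReal_pow, Real.sq_sqrt hr]

theorem stmt6_general (C₁ C₂ c d : ℕ) (hC₁sqf : Squarefree C₁)
    (hfact : C₁ * C₂ = c * d ^ 2)
    (p : ℕ) (hpodd : Odd p)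
    (x y : ℕ) (hxpos : 0 < x)
    (heq : C₁ * x ^ 2 + C₂ = y ^ p)
    (δ : ℂ) (hδK : δ ∈ Kf c) (hδint : IsIntegral ℤ δ)
    (hδeq : (C₁ : ℂ) ^ ((p - 1) / 2) * ((C₁ : ℂ) * (x : ℂ) + (d : ℂ) * sqrtneg c) = δ ^ p)
    (α β : ℂ) (hα : α = δ / (Real.sqrt C₁ : ℂ))
    (hβ : β = (starRingEnd ℂ) δ / (Real.sqrt C₁ : ℂ))
    :
    ∃ m : ℤ, m ≠ 0 ∧ (α + β) ^ 2 = (m : ℂ) := by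
  have hp0 : p ≠ 0 := hpodd.pos.ne'
  obtain ⟨t, ht⟩ := exists_int_eq_add_conj_of_mem_Kf hδK hδint
  have hnorm := Complex.mul_conj_eq_of_pow_eq (by positivity) hp0 (pow_mul_conj_pow_eq hpodd hfact heq hδeq)
  have hsum := pow_add_conj_pow_eq hδeq
  have hdickson : (dickson 1 ((C₁ : ℤ) * y) p).eval t = 2 * C₁ ^ ((p - 1) / 2 + 1) * x := by
    have h := dickson_one_eval_intCast (N := C₁ * y) ht (by rw [hnorm]; push_cast; rfl) p
    rw [hsum] at h
    exact_mod_cast h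
  obtain ⟨u, rfl⟩ : (C₁ : ℤ) ∣ t := by
    refine Int.dvd_of_dvd_dickson_one_eval (Int.squarefree_natCast.2 hC₁sqf)
      (dvd_mul_right _ (y : ℤ)) hp0 ?_
    rw [hdickson]
    exact ⟨2 * C₁ ^ ((p - 1) / 2) * x, by ring⟩
  have hu : u ≠ 0 := by
    rintro rfl
    have h := hpodd.pow_add_pow_eq_zero (by simpa using ht)
    rw [hsum] at h
    norm_cast at h
    simp [hC₁sqf.ne_zero, hxpos.ne'] at h
  refine ⟨C₁ * u ^ 2, mul_ne_zero (by exact_mod_cast hC₁sqf.ne_zero) (pow_ne_zero 2 hu), ?_⟩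
  rw [hα, hβ, div_ofReal_sqrt_add_div_ofReal_sqrt_sq _ _ (Nat.cast_nonneg C₁), ht, div_eq_iff (by exact_mod_cast hC₁sqf.ne_zero)]
  push_cast; ring

theorem stmt6 (C₁ C₂ c d : ℕ) (hC₁pos : 0 < C₁) (hC₁sqf : Squarefree C₁)
    (hC₂pos : 0 < C₂) (hcop : Nat.gcd C₁ C₂ = 1) (hmod8 : C₁ * C₂ % 8 ≠ 7)
    (hcpos : 0 < c) (hdpos : 0 < d) (hcsqf : Squarefree c)
    (hfact : C₁ * C₂ = c * d ^ 2)
    (p : ℕ) (hp : p.Prime) (hpodd : Odd p)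
    (hpcl : ¬ p ∣ classNumberK c)
    (hp3 : p = 3 → ¬ ∃ m : ℤ, (C₁ : ℤ) * (C₂ : ℤ) = 3 * m ^ 2)
    (x y : ℕ) (hxpos : 0 < x) (hypos : 0 < y)
    (heq : C₁ * x ^ 2 + C₂ = y ^ p)
    (hgcd : Nat.gcd (Nat.gcd (C₁ * x ^ 2) C₂) (y ^ p) = 1)
    (δ : ℂ) (hδK : δ ∈ Kf c) (hδint : IsIntegral ℤ δ)
    (hδeq : (C₁ : ℂ) ^ ((p - 1) / 2) * ((C₁ : ℂ) * (x : ℂ) + (d : ℂ) * sqrtneg c) = δ ^ p)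
    (α β : ℂ) (hα : α = δ / (Real.sqrt C₁ : ℂ))
    (hβ : β = (starRingEnd ℂ) δ / (Real.sqrt C₁ : ℂ))
    :
    ∃ m : ℤ, m ≠ 0 ∧ (α + β) ^ 2 = (m : ℂ) :=
  stmt6_general C₁ C₂ c d hC₁sqf hfact p hpodd x y hxpos heq δ hδK hδint hδeq α β hα hβ
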